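/- arXiv:1105.0638 — 9 statements merged into one kernel-verified Lean document; each statement's English description precedes it below -/
import Mathlib

section
/- Let A ∈ ℝ^{m×n} have columns a_1,…,a_n, let b ∈ ℝ^m with b ≠ 0, let p ∈ (0,1), λ > 0, and let k be an integer with 2 ≤ k ≤ n. If λ ≥ β(k) := k^{p/2−1} (2α/(p(1−p)))^{p/2} ‖b‖₂^{2−p}, where α = max_{1≤i≤n} ‖a_i‖₂², then every global minimizer x* of f_p over ℝ^n satisfies ‖x*‖₀ < k. -/
/-- The objective `f_p(x) = ‖Ax − b‖₂² + λ Σ_i |x_i|^p`. -/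
noncomputable def fp (m n : ℕ) (A : Matrix (Fin m) (Fin n) ℝ) (b : Fin m → ℝ)
    (lam p : ℝ) (x : Fin n → ℝ) : ℝ :=
  (∑ i, (A.mulVec x i - b i) ^ 2) + lam * ∑ i, |x i| ^ p

/-! At a global minimizer `x`, compare `f_p(x)` with the values at the two points where a
nonzero entry `x_i` is replaced by `0` and by `2 x_i`: the linear terms of the quadratic part
cancel, and with Bernoulli's inequality `2 ^ p ≤ 1 + p` this gives
`|x_i| ^ (2 - p) ≥ λ (1 - p) / (2α) > λ p (1 - p) / (2α)`. So every nonzero entry contributes more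
than `λ (λ p (1 - p) / (2α)) ^ (p / (2 - p))` to the penalty, which is at most `f_p(0) = ‖b‖²`.
Raising `λ ≥ β(k)` to the power `2 / (2 - p)` shows that `k` such contributions already reach
`‖b‖²`. -/

open Finset Matrix

theorem Fintype.sum_comp_add_single {ι R M : Type*} [Fintype ι] [DecidableEq ι] [AddMonoid R]
    [AddCommGroup M] (g : R → M) (x : ι → R) (i : ι) (h : R) :
    ∑ l, g ((x + Pi.single i h : ι → R) l) = ∑ l, g (x l) + (g (x i + h) - g (x i)) := by
  rw [← sub_eq_iff_eq_add', ← sum_sub_distrib,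
    Fintype.sum_eq_single i fun l hl => by simp [hl]]
  simp

theorem Matrix.sum_sq_mulVec_add_single_sub {ι κ R : Type*} [Fintype ι] [Fintype κ]
    [DecidableEq κ] [CommRing R] (A : Matrix ι κ R) (b : ι → R) (x : κ → R) (i : κ) (h : R) :
    ∑ j, ((A *ᵥ (x + Pi.single i h)) j - b j) ^ 2 =
      ∑ j, ((A *ᵥ x) j - b j) ^ 2 + 2 * h * ∑ j, ((A *ᵥ x) j - b j) * A j i
        + h ^ 2 * ∑ j, A j i ^ 2 := by
  simp only [mulVec_add, mulVec_single, Pi.add_apply, Pi.smul_apply, col_apply, op_smul_eq_mul,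
    mul_sum, ← sum_add_distrib]
  exact sum_congr rfl fun j _ => by ring

theorem fp_add_single {m n : ℕ} (A : Matrix (Fin m) (Fin n) ℝ) (b : Fin m → ℝ) (lam p : ℝ)
    (x : Fin n → ℝ) (i : Fin n) (h : ℝ) :
    fp m n A b lam p (x + Pi.single i h) =
      fp m n A b lam p x + 2 * h * ∑ j, ((A *ᵥ x) j - b j) * A j i
        + h ^ 2 * ∑ j, A j i ^ 2 + lam * (|x i + h| ^ p - |x i| ^ p) := by
  simp only [fp, Matrix.sum_sq_mulVec_add_single_sub,
    Fintype.sum_comp_add_single (fun t => |t| ^ p)]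
  ring

section Minimizer

variable {m n : ℕ} {A : Matrix (Fin m) (Fin n) ℝ} {b : Fin m → ℝ} {lam p : ℝ} {x : Fin n → ℝ}

theorem mul_sum_rpow_le_of_forall_fp_le (hmin : ∀ y, fp m n A b lam p x ≤ fp m n A b lam p y)
    (hp : p ≠ 0) : lam * ∑ i, |x i| ^ p ≤ ∑ i, b i ^ 2 := by
  have h := hmin 0
  simp only [fp, mulVec_zero, Pi.zero_apply, zero_sub, neg_sq, abs_zero, Real.zero_rpow hp,
    sum_const_zero, mul_zero, add_zero] at h
  linarith [sum_nonneg fun j (_ : j ∈ univ) => sq_nonneg ((A *ᵥ x) j - b j)]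

theorem mul_one_sub_mul_rpow_le_of_forall_fp_le
    (hmin : ∀ y, fp m n A b lam p x ≤ fp m n A b lam p y)
    (hlam : 0 ≤ lam) (hp0 : 0 < p) (hp1 : p ≤ 1) (i : Fin n) :
    lam * (1 - p) * |x i| ^ p ≤ 2 * x i ^ 2 * ∑ j, A j i ^ 2 := by
  have hdouble := hmin (x + Pi.single i (x i))
  have hzero := hmin (x + Pi.single i (-x i))
  rw [fp_add_single] at hdouble hzero
  have htwo : |x i + x i| ^ p = 2 ^ p * |x i| ^ p := by
    rw [← two_mul, abs_mul, abs_two, Real.mul_rpow zero_le_two (abs_nonneg _)]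
  have hbernoulli : (2 : ℝ) ^ p ≤ 1 + p := by
    simpa [one_add_one_eq_two] using
      rpow_one_add_le_one_add_mul_self (s := 1) (by norm_num) hp0.le hp1
  rw [htwo] at hdouble
  rw [add_neg_cancel, abs_zero, Real.zero_rpow hp0.ne'] at hzero
  nlinarith [mul_le_mul_of_nonneg_left hbernoulli
    (mul_nonneg hlam (Real.rpow_nonneg (abs_nonneg (x i)) p))]

theorem mul_mul_one_sub_lt_mul_rpow_of_forall_fp_le
    (hmin : ∀ y, fp m n A b lam p x ≤ fp m n A b lam p y) {alpha : ℝ}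
    (halpha : ∀ i, ∑ j, A j i ^ 2 ≤ alpha) (hlam : 0 < lam) (hp0 : 0 < p) (hp1 : p < 1)
    {i : Fin n} (hx : x i ≠ 0) :
    lam * p * (1 - p) < 2 * alpha * |x i| ^ (2 - p) := by
  have hu : 0 < |x i| := abs_pos.mpr hx
  have hsq : x i ^ 2 = |x i| ^ (2 - p) * |x i| ^ p := by
    rw [← Real.rpow_add hu, sub_add_cancel, Real.rpow_two, sq_abs]
  have h := mul_one_sub_mul_rpow_le_of_forall_fp_le hmin hlam.le hp0 hp1.le i
  rw [hsq] at h
  have h' : lam * (1 - p) ≤ 2 * (∑ j, A j i ^ 2) * |x i| ^ (2 - p) :=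
    le_of_mul_le_mul_right (by linarith) (Real.rpow_pos_of_pos hu p)
  nlinarith [halpha i, mul_pos hlam (sub_pos.mpr hp1), Real.rpow_nonneg hu.le (2 - p)]

end Minimizer

theorem rpow_lt_rpow_of_lt_rpow_sub {D u p : ℝ} (hD : 0 ≤ D) (hu : 0 ≤ u) (hp0 : 0 < p)
    (hp2 : p < 2) (h : D < u ^ (2 - p)) : D ^ (p / (2 - p)) < u ^ p := by
  have hq : 0 < 2 - p := by linarith
  calc D ^ (p / (2 - p)) < (u ^ (2 - p)) ^ (p / (2 - p)) := by gcongr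
    _ = u ^ p := by rw [← Real.rpow_mul hu]; field_simp

theorem le_mul_mul_div_rpow_of_rpow_mul_le {k lam C B p : ℝ} (hk : 0 < k) (hlam : 0 < lam)
    (hC : 0 < C) (hB : 0 ≤ B) (hp0 : 0 < p) (hp2 : p < 2)
    (h : k ^ (p / 2 - 1) * C ^ (p / 2) * √B ^ (2 - p) ≤ lam) :
    B ≤ k * lam * (lam / C) ^ (p / (2 - p)) := by
  have hq : 0 < 2 - p := by linarith
  have hpow := Real.rpow_le_rpow (by positivity) h (div_pos two_pos hq).le
  rw [Real.mul_rpow (by positivity) (by positivity), Real.mul_rpow (by positivity) (by positivity),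
    ← Real.rpow_mul hk.le, ← Real.rpow_mul hC.le, ← Real.rpow_mul (Real.sqrt_nonneg B),
    show (p / 2 - 1) * (2 / (2 - p)) = -1 by field_simp; ring,
    show p / 2 * (2 / (2 - p)) = p / (2 - p) by field_simp,
    show (2 - p) * (2 / (2 - p)) = 2 by field_simp,
    show 2 / (2 - p) = 1 + p / (2 - p) by field_simp; ring,
    Real.rpow_neg_one, Real.rpow_two, Real.sq_sqrt hB, Real.rpow_add hlam, Real.rpow_one] at hpow
  rw [Real.div_rpow hlam.le hC.le]
  have hCp : 0 < C ^ (p / (2 - p)) := by positivity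
  rw [mul_div_assoc', le_div_iff₀ hCp]
  calc B * C ^ (p / (2 - p)) = k * (k⁻¹ * C ^ (p / (2 - p)) * B) := by field_simp
    _ ≤ k * (lam * lam ^ (p / (2 - p))) := by gcongr
    _ = k * lam * lam ^ (p / (2 - p)) := by ring

theorem stmt_0_general (m n : ℕ) (A : Matrix (Fin m) (Fin n) ℝ) (b : Fin m → ℝ)
    (p lam : ℝ) (hp0 : 0 < p) (hp1 : p < 1) (hlam : 0 < lam)
    (k : ℕ) (hk2 : 2 ≤ k)
    (alpha : ℝ)
    (halpha : IsGreatest (Set.range fun i : Fin n => ∑ j, A j i ^ 2) alpha)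
    (hlb : lam ≥ (k : ℝ) ^ (p / 2 - 1) * (2 * alpha / (p * (1 - p))) ^ (p / 2) *
      Real.sqrt (∑ i, b i ^ 2) ^ (2 - p))
    (x : Fin n → ℝ)
    (hmin : ∀ y : Fin n → ℝ, fp m n A b lam p x ≤ fp m n A b lam p y) :
    (Finset.univ.filter fun i => x i ≠ 0).card < k := by
  set S := Finset.univ.filter fun i => x i ≠ 0
  by_contra! hkS
  have hS : S.Nonempty := Finset.card_pos.mp (by omega)
  have hp1' : 0 < 1 - p := sub_pos.mpr hp1
  have hcoord : ∀ i ∈ S, lam * p * (1 - p) < 2 * alpha * |x i| ^ (2 - p) := fun i hi =>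
    mul_mul_one_sub_lt_mul_rpow_of_forall_fp_le hmin (fun i => halpha.2 (Set.mem_range_self i))
      hlam hp0 hp1 (mem_filter.mp hi).2
  have halpha0 : 0 < alpha := by
    obtain ⟨i, hi⟩ := hS
    nlinarith [hcoord i hi, mul_pos (mul_pos hlam hp0) hp1',
      Real.rpow_nonneg (abs_nonneg (x i)) (2 - p)]
  set C := 2 * alpha / (p * (1 - p))
  have hC : 0 < C := by positivity
  have hlower : ∀ i ∈ S, (lam / C) ^ (p / (2 - p)) < |x i| ^ p := fun i hi =>
    rpow_lt_rpow_of_lt_rpow_sub (by positivity) (abs_nonneg _) hp0 (by linarith) <| by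
      rw [div_lt_iff₀ hC, mul_div_assoc', lt_div_iff₀ (by positivity)]
      linarith [hcoord i hi]
  have hB := le_mul_mul_div_rpow_of_rpow_mul_le (by norm_cast; omega) hlam hC
    (sum_nonneg fun i _ => sq_nonneg (b i)) hp0 (by linarith) hlb
  refine lt_irrefl (∑ i, b i ^ 2) ?_
  calc ∑ i, b i ^ 2 ≤ k * lam * (lam / C) ^ (p / (2 - p)) := hB
    _ ≤ S.card * lam * (lam / C) ^ (p / (2 - p)) := by gcongr
    _ = lam * ∑ _i ∈ S, (lam / C) ^ (p / (2 - p)) := by rw [sum_const, nsmul_eq_mul]; ring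
    _ < lam * ∑ i ∈ S, |x i| ^ p :=
      mul_lt_mul_of_pos_left (sum_lt_sum_of_nonempty hS hlower) hlam
    _ ≤ lam * ∑ i, |x i| ^ p :=
      mul_le_mul_of_nonneg_left (sum_le_sum_of_subset_of_nonneg (subset_univ S)
        fun i _ _ => by positivity) hlam.le
    _ ≤ ∑ i, b i ^ 2 := mul_sum_rpow_le_of_forall_fp_le hmin hp0.ne'

/-- If `λ ≥ β(k) = k^(p/2−1) (2α/(p(1−p)))^(p/2) ‖b‖^(2−p)`, where
`α = max_i ‖a_i‖²` is the largest squared column norm of `A`, then every global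
minimizer of `f_p` has fewer than `k` nonzero entries. -/
theorem stmt_0 (m n : ℕ) (A : Matrix (Fin m) (Fin n) ℝ) (b : Fin m → ℝ)
    (hb : b ≠ 0) (p lam : ℝ) (hp0 : 0 < p) (hp1 : p < 1) (hlam : 0 < lam)
    (k : ℕ) (hk2 : 2 ≤ k) (hkn : k ≤ n)
    (alpha : ℝ)
    (halpha : IsGreatest (Set.range fun i : Fin n => ∑ j, A j i ^ 2) alpha)
    (hlb : lam ≥ (k : ℝ) ^ (p / 2 - 1) * (2 * alpha / (p * (1 - p))) ^ (p / 2) *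
      Real.sqrt (∑ i, b i ^ 2) ^ (2 - p))
    (x : Fin n → ℝ)
    (hmin : ∀ y : Fin n → ℝ, fp m n A b lam p x ≤ fp m n A b lam p y) :
    (Finset.univ.filter fun i => x i ≠ 0).card < k :=
  stmt_0_general m n A b p lam hp0 hp1 hlam k hk2 alpha halpha hlb x hmin
end

section
/- Let A ∈ ℝ^{m×n} have columns a_1,…,a_n, let b ∈ ℝ^m with b ≠ 0, let p ∈ (0,1) and λ > 0. If λ ≥ β(1) := (2α/(p(1−p)))^{p/2} ‖b‖₂^{2−p}, where α = max_{1≤i≤n} ‖a_i‖₂², then x = 0 is the unique global minimizer of f_p over ℝ^n. -/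
open Finset
open scoped Matrix

theorem Real.rpow_sum_le_sum_rpow {ι : Type*} (s : Finset ι) {f : ι → ℝ}
    (hf : ∀ i ∈ s, 0 ≤ f i) {p : ℝ} (hp0 : 0 < p) (hp1 : p ≤ 1) :
    (∑ i ∈ s, f i) ^ p ≤ ∑ i ∈ s, f i ^ p := by
  classical
  induction s using Finset.induction_on with
  | empty => simp [Real.zero_rpow hp0.ne']
  | insert j s hj ih =>
    rw [sum_insert hj, sum_insert hj]
    have hfj := hf j (mem_insert_self j s)
    have hfs : ∀ i ∈ s, 0 ≤ f i := fun i hi => hf i (mem_insert_of_mem hi)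
    calc (f j + ∑ i ∈ s, f i) ^ p ≤ f j ^ p + (∑ i ∈ s, f i) ^ p :=
          Real.rpow_add_le_add_rpow hfj (sum_nonneg hfs) hp0.le hp1
      _ ≤ f j ^ p + ∑ i ∈ s, f i ^ p := by gcongr; exact ih hfs

theorem norm_sum_smul_le_mul_sum_abs {E ι : Type*} [SeminormedAddCommGroup E] [NormedSpace ℝ E]
    [Fintype ι] {a : ι → E} {c : ℝ} (ha : ∀ i, ‖a i‖ ≤ c) (x : ι → ℝ) :
    ‖∑ i, x i • a i‖ ≤ c * ∑ i, |x i| := by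
  calc ‖∑ i, x i • a i‖ ≤ ∑ i, |x i| * ‖a i‖ := by
        simpa only [norm_smul, Real.norm_eq_abs] using norm_sum_le univ fun i => x i • a i
    _ ≤ ∑ i, |x i| * c := by gcongr with i; exact ha i
    _ = c * ∑ i, |x i| := by rw [← sum_mul, mul_comm]

theorem two_mul_mul_lt_sq_add_of_rpow_le {p B s w : ℝ} (hp0 : 0 < p) (hp1 : p ≤ 1) (hB : 0 ≤ B)
    (hs : 0 ≤ s) (hw : 0 < w) (h : (2 * s) ^ p * B ^ (2 - p) ≤ w) :
    2 * B * s < s ^ 2 + w := by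
  rcases hB.eq_or_lt with rfl | hB
  · linarith [sq_nonneg s]
  rcases le_or_gt (2 * s) B with hsB | hBs
  · have h2sB : 2 * s * B ≤ w := calc
      2 * s * B = (2 * s) ^ p * (2 * s) ^ (1 - p) * B := by
        rw [← Real.rpow_add' (by positivity) (by norm_num), add_sub_cancel, Real.rpow_one]
      _ ≤ (2 * s) ^ p * B ^ (1 - p) * B := by gcongr
      _ = (2 * s) ^ p * B ^ (2 - p) := by
        rw [mul_assoc, ← Real.rpow_add_one hB.ne']; ring_nf
      _ ≤ w := h
    rcases hs.eq_or_lt with rfl | hs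
    · simpa using hw
    · nlinarith
  · have hB2 : B ^ 2 < w := calc
      B ^ 2 = B ^ p * B ^ (2 - p) := by
        rw [← Real.rpow_add hB, add_sub_cancel]; norm_cast
      _ < (2 * s) ^ p * B ^ (2 - p) := by gcongr
      _ ≤ w := h
    nlinarith [sq_nonneg (s - B)]

theorem norm_sq_lt_norm_sum_smul_sub_sq_add {E ι : Type*} [SeminormedAddCommGroup E]
    [NormedSpace ℝ E] [Fintype ι] {a : ι → E} {b : E} {c p lam : ℝ} (hp0 : 0 < p)
    (hp1 : p ≤ 1) (hlam : 0 < lam) (ha : ∀ i, ‖a i‖ ≤ c)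
    (hthr : (2 * c) ^ p * ‖b‖ ^ (2 - p) ≤ lam) {x : ι → ℝ} (hx : x ≠ 0) :
    ‖b‖ ^ 2 < ‖∑ i, x i • a i - b‖ ^ 2 + lam * ∑ i, |x i| ^ p := by
  obtain ⟨i₀, hi₀⟩ := Function.ne_iff.1 hx
  set s := ‖∑ i, x i • a i‖
  have hc : 0 ≤ c := (norm_nonneg _).trans (ha i₀)
  have hw : (2 * s) ^ p * ‖b‖ ^ (2 - p) ≤ lam * ∑ i, |x i| ^ p := calc
    (2 * s) ^ p * ‖b‖ ^ (2 - p) ≤ (2 * (c * ∑ i, |x i|)) ^ p * ‖b‖ ^ (2 - p) := by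
      gcongr; exact norm_sum_smul_le_mul_sum_abs ha x
    _ = (2 * c) ^ p * ‖b‖ ^ (2 - p) * (∑ i, |x i|) ^ p := by
      rw [← mul_assoc, Real.mul_rpow (by positivity) (by positivity)]; ring
    _ ≤ lam * ∑ i, |x i| ^ p := by
      gcongr
      exact Real.rpow_sum_le_sum_rpow univ (fun i _ => abs_nonneg (x i)) hp0 hp1
  have hpos : 0 < lam * ∑ i, |x i| ^ p := mul_pos hlam <| sum_pos' (fun i _ => by positivity)
    ⟨i₀, mem_univ _, Real.rpow_pos_of_pos (abs_pos.2 hi₀) p⟩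
  have hlt := two_mul_mul_lt_sq_add_of_rpow_le hp0 hp1 (norm_nonneg b) (norm_nonneg _) hpos hw
  have hrev : (s - ‖b‖) ^ 2 ≤ ‖∑ i, x i • a i - b‖ ^ 2 := by
    simpa only [sq_abs] using pow_le_pow_left₀ (abs_nonneg _) (abs_norm_sub_norm_le _ b) 2
  nlinarith

theorem EuclideanSpace.norm_toLp_eq_sqrt {ι : Type*} [Fintype ι] (v : ι → ℝ) :
    ‖WithLp.toLp 2 v‖ = √(∑ i, v i ^ 2) := by
  simp [EuclideanSpace.norm_eq]

theorem fp_eq_norm_sq (m n : ℕ) (A : Matrix (Fin m) (Fin n) ℝ) (b : Fin m → ℝ) (lam p : ℝ)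
    (x : Fin n → ℝ) :
    fp m n A b lam p x =
      ‖∑ i, x i • WithLp.toLp 2 (Aᵀ i) - WithLp.toLp 2 b‖ ^ 2 + lam * ∑ i, |x i| ^ p := by
  rw [fp, EuclideanSpace.real_norm_sq_eq]
  congr 2 with j
  simp [Matrix.mulVec, dotProduct, mul_comm]

theorem fp_zero_lt_fp {m n : ℕ} {A : Matrix (Fin m) (Fin n) ℝ} {b : Fin m → ℝ} {lam p c : ℝ}
    (hp0 : 0 < p) (hp1 : p ≤ 1) (hlam : 0 < lam) (hA : ∀ i, √(∑ j, A j i ^ 2) ≤ c)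
    (hthr : (2 * c) ^ p * √(∑ j, b j ^ 2) ^ (2 - p) ≤ lam) {x : Fin n → ℝ} (hx : x ≠ 0) :
    fp m n A b lam p 0 < fp m n A b lam p x := by
  have hfp0 : fp m n A b lam p 0 = ‖WithLp.toLp 2 b‖ ^ 2 := by
    simp [fp_eq_norm_sq, Real.zero_rpow hp0.ne']
  rw [hfp0, fp_eq_norm_sq]
  refine norm_sq_lt_norm_sum_smul_sub_sq_add (c := c) hp0 hp1 hlam (fun i => ?_) ?_ hx
  · simpa only [EuclideanSpace.norm_toLp_eq_sqrt, Matrix.transpose_apply] using hA i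
  · rwa [EuclideanSpace.norm_toLp_eq_sqrt]

theorem two_mul_sqrt_rpow_le {α p : ℝ} (hα : 0 ≤ α) (hp0 : 0 < p) (hp1 : p < 1) :
    (2 * √α) ^ p ≤ (2 * α / (p * (1 - p))) ^ (p / 2) := by
  have h4 : 4 * α ≤ 2 * α / (p * (1 - p)) := by
    rw [le_div_iff₀ (by nlinarith)]
    nlinarith [sq_nonneg (2 * p - 1)]
  calc (2 * √α) ^ p = ((2 * √α) ^ (2 : ℝ)) ^ (p / 2) := by
        rw [← Real.rpow_mul (by positivity)]; ring_nf
    _ = (4 * α) ^ (p / 2) := by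
        rw [Real.rpow_two, mul_pow, Real.sq_sqrt hα]; norm_num
    _ ≤ (2 * α / (p * (1 - p))) ^ (p / 2) := by gcongr

theorem stmt_1_general (m n : ℕ) (A : Matrix (Fin m) (Fin n) ℝ) (b : Fin m → ℝ)
    (p lam : ℝ) (hp0 : 0 < p) (hp1 : p < 1) (hlam : 0 < lam)
    (alpha : ℝ)
    (halpha : IsGreatest (Set.range fun i : Fin n => ∑ j, A j i ^ 2) alpha)
    (hlb : lam ≥ (2 * alpha / (p * (1 - p))) ^ (p / 2) *
      Real.sqrt (∑ i, b i ^ 2) ^ (2 - p)) :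
    (∀ y : Fin n → ℝ, fp m n A b lam p 0 ≤ fp m n A b lam p y) ∧
      ∀ x : Fin n → ℝ, (∀ y : Fin n → ℝ, fp m n A b lam p x ≤ fp m n A b lam p y) →
        x = 0 := by
  have hα : 0 ≤ alpha := by
    obtain ⟨i, rfl⟩ := halpha.1
    positivity
  have hlt : ∀ x ≠ 0, fp m n A b lam p 0 < fp m n A b lam p x :=
    fun x hx => fp_zero_lt_fp hp0 hp1.le hlam (fun i => Real.sqrt_le_sqrt (halpha.2 ⟨i, rfl⟩))
      (le_trans (by gcongr; exact two_mul_sqrt_rpow_le hα hp0 hp1) hlb) hx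
  refine ⟨fun y => ?_, fun x hmin => ?_⟩
  · rcases eq_or_ne y 0 with rfl | hy
    exacts [le_rfl, (hlt y hy).le]
  · by_contra hx
    exact (hlt x hx).not_ge (hmin 0)

/-- If `λ ≥ β(1) = (2α/(p(1−p)))^(p/2) ‖b‖^(2−p)`, where `α = max_i ‖a_i‖²` is the
largest squared column norm of `A`, then `x = 0` is the unique global minimizer
of `f_p`. -/
theorem stmt_1 (m n : ℕ) (A : Matrix (Fin m) (Fin n) ℝ) (b : Fin m → ℝ)
    (hb : b ≠ 0) (p lam : ℝ) (hp0 : 0 < p) (hp1 : p < 1) (hlam : 0 < lam)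
    (alpha : ℝ)
    (halpha : IsGreatest (Set.range fun i : Fin n => ∑ j, A j i ^ 2) alpha)
    (hlb : lam ≥ (2 * alpha / (p * (1 - p))) ^ (p / 2) *
      Real.sqrt (∑ i, b i ^ 2) ^ (2 - p)) :
    (∀ y : Fin n → ℝ, fp m n A b lam p 0 ≤ fp m n A b lam p y) ∧
      ∀ x : Fin n → ℝ, (∀ y : Fin n → ℝ, fp m n A b lam p x ≤ fp m n A b lam p y) →
        x = 0 :=
  stmt_1_general m n A b p lam hp0 hp1 hlam alpha halpha hlb
end

section
/- Let A ∈ ℝ^{m×n}, let b ∈ ℝ^m with b ≠ 0, let p ∈ (0,1), λ > 0, and let k be an integer with 2 ≤ k ≤ n. If λ ≥ γ(k) := k^{p−1} (2‖A‖/p)^p ‖b‖₂^{2−p}, where ‖A‖ denotes the spectral (operator 2-) norm of A, then every local minimizer x* of f_p over ℝ^n satisfying f_p(x*) ≤ f_p(0) = ‖b‖₂² has ‖x*‖₀ < k. -/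
open Finset Function Matrix

theorem hasDerivAt_abs_rpow_of_ne_zero {p c : ℝ} (hc : c ≠ 0) :
    HasDerivAt (fun t : ℝ => |t| ^ p) (SignType.sign c * p * |c| ^ (p - 1)) c :=
  (hasDerivAt_abs hc).rpow_const (Or.inl (abs_ne_zero.2 hc))

theorem hasDerivAt_sum_comp_update {ι : Type*} [Fintype ι] [DecidableEq ι] {φ : ℝ → ℝ}
    {φ' : ℝ} (x : ι → ℝ) (i : ι) (hφ : HasDerivAt φ φ' (x i)) :
    HasDerivAt (fun t => ∑ l, φ (update x i t l)) φ' (x i) := by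
  have h : ∀ t, ∑ l, φ (update x i t l) = φ t + ∑ l ∈ univ \ {i}, φ (x l) := fun t => by
    rw [← sum_update_of_mem (mem_univ i)]
    exact sum_congr rfl fun l _ => apply_update (fun _ => φ) x i t l
  simpa only [h] using hφ.add_const _

theorem abs_sum_mul_le_of_mulVec_le {ι κ : Type*} [Fintype ι] [Fintype κ] [DecidableEq κ]
    (A : Matrix ι κ ℝ) {c : ℝ}
    (hA : ∀ y, √(∑ i, (A *ᵥ y) i ^ 2) ≤ c * √(∑ j, y j ^ 2)) (j : κ) (r : ι → ℝ) :
    |∑ i, A i j * r i| ≤ c * √(∑ i, r i ^ 2) := by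
  have hcol : √(∑ i, A i j ^ 2) ≤ c := by
    simpa [mulVec_single_one, Pi.single_apply] using hA (Pi.single j 1)
  calc |∑ i, A i j * r i| ≤ √(∑ i, A i j ^ 2) * √(∑ i, r i ^ 2) := by
        rw [← Real.sqrt_mul (sum_nonneg fun _ _ => sq_nonneg _)]
        exact Real.abs_le_sqrt (sum_mul_sq_le_sq_mul_sq _ _ _)
    _ ≤ c * √(∑ i, r i ^ 2) := by gcongr

theorem fp_zero {m n : ℕ} (A : Matrix (Fin m) (Fin n) ℝ) (b : Fin m → ℝ) (lam : ℝ) {p : ℝ}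
    (hp : p ≠ 0) : fp m n A b lam p 0 = ∑ i, b i ^ 2 := by
  simp [fp, Real.zero_rpow hp]

theorem lam_mul_rpow_eq_of_isLocalMin_fp {m n : ℕ} {A : Matrix (Fin m) (Fin n) ℝ}
    {b : Fin m → ℝ} {lam p : ℝ} (hlam : 0 ≤ lam) (hp : 0 ≤ p) {x : Fin n → ℝ}
    (hloc : IsLocalMin (fp m n A b lam p) x) {i : Fin n} (hi : x i ≠ 0) :
    lam * (p * |x i| ^ (p - 1)) = 2 * |∑ j, A j i * (A *ᵥ x - b) j| := by
  have hupd := hasDerivAt_update x i (x i)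
  have hslice : IsLocalMin (fun t => fp m n A b lam p (update x i t)) (x i) :=
    (update_eq_self i x ▸ hloc).comp_continuous hupd.continuousAt
  have hres : HasDerivAt (fun t => A *ᵥ update x i t) (A *ᵥ Pi.single i 1) (x i) :=
    (mulVecLin A).toContinuousLinearMap.hasFDerivAt.comp_hasDerivAt _ hupd
  have hquad : HasDerivAt (fun t => ∑ j, ((A *ᵥ update x i t) j - b j) ^ 2)
      (2 * ∑ j, A j i * (A *ᵥ x - b) j) (x i) := by
    refine (HasDerivAt.fun_sum (u := univ) fun j _ =>
      ((hasDerivAt_pi.1 hres j).sub_const (b j)).fun_pow 2).congr_deriv ?_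
    simp only [Nat.cast_ofNat, update_eq_self, Nat.add_one_sub_one, pow_one, mulVec_single,
      MulOpposite.op_one, Pi.smul_apply, col_apply, one_smul, Pi.sub_apply, mul_sum]
    exact sum_congr rfl fun j _ => by ring
  have hpen := hasDerivAt_sum_comp_update x i (hasDerivAt_abs_rpow_of_ne_zero (p := p) hi)
  have hzero := hslice.hasDerivAt_eq_zero (hquad.add (hpen.const_mul lam))
  have hsign : |(SignType.sign (x i) : ℝ)| = 1 := by
    rcases hi.lt_or_gt with h | h <;> simp [h]
  calc lam * (p * |x i| ^ (p - 1))
      = |lam * (SignType.sign (x i) * p * |x i| ^ (p - 1))| := by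
        rw [abs_mul, abs_mul, abs_mul, hsign, abs_of_nonneg hlam, abs_of_nonneg hp,
          abs_of_nonneg (Real.rpow_nonneg (abs_nonneg (x i)) _)]
        ring
    _ = 2 * |∑ j, A j i * (A *ᵥ x - b) j| := by
        rw [eq_neg_of_add_eq_zero_right hzero, abs_neg, abs_mul, abs_two]

theorem sq_le_mul_rpow_of_gamma_le {p lam a β k u : ℝ} (hp0 : 0 < p) (hp1 : p < 1)
    (hlam : 0 < lam) (ha : 0 < a) (hβ : 0 < β) (hk : 0 < k) (hu : 0 < u)
    (hγ : k ^ (p - 1) * (2 * a / p) ^ p * β ^ (2 - p) ≤ lam)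
    (hstat : lam * (p * u ^ (p - 1)) ≤ 2 * a * β) :
    β ^ 2 ≤ k * lam * u ^ p := by
  rw [← Real.log_le_log_iff (by positivity) (by positivity), Real.log_pow,
    Real.log_mul (by positivity) (by positivity), Real.log_mul hk.ne' hlam.ne',
    Real.log_rpow hu]
  have hγ' := Real.log_le_log (by positivity) hγ
  rw [Real.log_mul (by positivity) (by positivity), Real.log_mul (by positivity) (by positivity),
    Real.log_rpow hk, Real.log_rpow (by positivity), Real.log_rpow hβ,
    Real.log_div (by positivity) hp0.ne'] at hγ'
  have hstat' := Real.log_le_log (by positivity) hstat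
  rw [Real.log_mul hlam.ne' (by positivity), Real.log_mul hp0.ne' (by positivity),
    Real.log_rpow hu, Real.log_mul (by positivity) hβ.ne'] at hstat'
  -- `(1 - p) * (goal)` is the sum of `hγ'` and `p * hstat'`.
  refine le_of_mul_le_mul_left ?_ (sub_pos.2 hp1)
  push_cast
  linarith [mul_le_mul_of_nonneg_left hstat' hp0.le]

theorem stmt_3_general (m n : ℕ) (A : Matrix (Fin m) (Fin n) ℝ) (b : Fin m → ℝ)
    (p lam : ℝ) (hp0 : 0 < p) (hp1 : p < 1) (hlam : 0 < lam)
    (k : ℕ) (hk2 : 2 ≤ k)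
    (nA : ℝ)
    (hnA : IsLeast {c : ℝ | 0 ≤ c ∧ ∀ y : Fin n → ℝ,
      Real.sqrt (∑ i, (A.mulVec y i) ^ 2) ≤ c * Real.sqrt (∑ j, y j ^ 2)} nA)
    (hlb : lam ≥ (k : ℝ) ^ (p - 1) * (2 * nA / p) ^ p *
      Real.sqrt (∑ i, b i ^ 2) ^ (2 - p))
    (x : Fin n → ℝ)
    (hloc : IsLocalMin (fp m n A b lam p) x)
    (hlev : fp m n A b lam p x ≤ fp m n A b lam p 0) :
    (Finset.univ.filter fun i => x i ≠ 0).card < k := by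
  by_contra! hk
  set S := univ.filter fun i => x i ≠ 0
  set ρ := √(∑ j, (A *ᵥ x - b) j ^ 2)
  set β := √(∑ i, b i ^ 2)
  have hstat (i : Fin n) (hi : x i ≠ 0) : lam * (p * |x i| ^ (p - 1)) ≤ 2 * nA * ρ := by
    rw [lam_mul_rpow_eq_of_isLocalMin_fp hlam.le hp0.le hloc hi, mul_assoc]
    exact mul_le_mul_of_nonneg_left (abs_sum_mul_le_of_mulVec_le A hnA.1.2 i _) zero_le_two
  have hdescent : ρ ^ 2 + lam * ∑ i, |x i| ^ p ≤ β ^ 2 := by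
    rwa [Real.sq_sqrt (by positivity), Real.sq_sqrt (by positivity), ← fp_zero A b lam hp0.ne']
  have hpen : 0 ≤ lam * ∑ i, |x i| ^ p := by positivity
  obtain ⟨i₀, hi₀⟩ : S.Nonempty := card_pos.1 (by omega)
  have hxi₀ : x i₀ ≠ 0 := (mem_filter.1 hi₀).2
  have hpos : 0 < 2 * nA * ρ := lt_of_lt_of_le (by positivity) (hstat i₀ hxi₀)
  have hρ : 0 < ρ := pos_of_mul_pos_right hpos (by linarith [hnA.1.1])
  have hnA_pos : 0 < nA := by linarith [pos_of_mul_pos_left hpos hρ.le]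
  have hρβ : ρ ≤ β :=
    (pow_le_pow_iff_left₀ hρ.le (Real.sqrt_nonneg _) two_ne_zero).1 (by linarith)
  have hentry (i : Fin n) (hi : i ∈ S) : β ^ 2 ≤ k * lam * |x i| ^ p :=
    sq_le_mul_rpow_of_gamma_le hp0 hp1 hlam hnA_pos (hρ.trans_le hρβ) (by positivity)
      (abs_pos.2 (mem_filter.1 hi).2) hlb ((hstat i (mem_filter.1 hi).2).trans (by gcongr))
  have hcontra : (k : ℝ) * β ^ 2 < k * β ^ 2 :=
    calc (k : ℝ) * β ^ 2 ≤ S.card * β ^ 2 := by gcongr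
      _ = ∑ i ∈ S, β ^ 2 := by rw [sum_const, nsmul_eq_mul]
      _ ≤ ∑ i ∈ S, k * lam * |x i| ^ p := sum_le_sum hentry
      _ ≤ ∑ i, k * lam * |x i| ^ p :=
        sum_le_sum_of_subset_of_nonneg (filter_subset _ _) fun i _ _ => by positivity
      _ = k * (lam * ∑ i, |x i| ^ p) := by rw [← mul_sum, mul_assoc]
      _ < k * β ^ 2 := by gcongr; linarith [pow_pos hρ 2]
  exact hcontra.false

/-- If `λ ≥ γ(k) = k^(p−1) (2‖A‖/p)^p ‖b‖^(2−p)`, where `‖A‖` is the spectral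
(operator 2-) norm of `A` (characterized as the least `c ≥ 0` with
`‖Ax‖₂ ≤ c ‖x‖₂` for all `x`), then every local minimizer `x*` of `f_p` with
`f_p(x*) ≤ f_p(0) = ‖b‖₂²` has fewer than `k` nonzero entries. -/
theorem stmt_3 (m n : ℕ) (A : Matrix (Fin m) (Fin n) ℝ) (b : Fin m → ℝ)
    (hb : b ≠ 0) (p lam : ℝ) (hp0 : 0 < p) (hp1 : p < 1) (hlam : 0 < lam)
    (k : ℕ) (hk2 : 2 ≤ k) (hkn : k ≤ n)
    (nA : ℝ)
    (hnA : IsLeast {c : ℝ | 0 ≤ c ∧ ∀ y : Fin n → ℝ,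
      Real.sqrt (∑ i, (A.mulVec y i) ^ 2) ≤ c * Real.sqrt (∑ j, y j ^ 2)} nA)
    (hlb : lam ≥ (k : ℝ) ^ (p - 1) * (2 * nA / p) ^ p *
      Real.sqrt (∑ i, b i ^ 2) ^ (2 - p))
    (x : Fin n → ℝ)
    (hloc : IsLocalMin (fp m n A b lam p) x)
    (hlev : fp m n A b lam p x ≤ fp m n A b lam p 0) :
    (Finset.univ.filter fun i => x i ≠ 0).card < k :=
  stmt_3_general m n A b p lam hp0 hp1 hlam k hk2 nA hnA hlb x hloc hlev
end

section
/- Let 0 ≤ p < 1 and q ≥ 1 be real numbers, let g(z) = |1 − z|^q + (1/2)|z|^p (with the convention |z|^0 = 0 for z = 0 and 1 for z ≠ 0), let c(p,q) = min_{z∈ℝ} g(z) and let z* = z*(p,q) be the unique minimizer of g. Then for all x, y ∈ ℝ, |x + y − 1|^q + (1/2)(|x|^p + |y|^p) ≥ c(p,q), and equality holds if and only if (x,y) = (z*, 0) or (x,y) = (0, z*). -/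
/-- `|z|^p` with the paper's convention `z^0 = 0` for `z = 0` and `z^0 = 1` for
`z ≠ 0` (for `p > 0` this is just `|z|^p`). -/
noncomputable def absPow (p z : ℝ) : ℝ := if z = 0 then 0 else |z| ^ p

lemma absPow_nonneg (p z : ℝ) : 0 ≤ absPow p z := by
  unfold absPow; split
  · exact le_refl 0
  · exact Real.rpow_nonneg (abs_nonneg z) p

lemma absPow_pos {p z : ℝ} (hz : z ≠ 0) : 0 < absPow p z := by
  unfold absPow; rw [if_neg hz]
  exact Real.rpow_pos_of_pos (abs_pos.2 hz) p

/-- strict subadditivity of `t ^ p` for `0 < p < 1` -/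
lemma rpow_strict_subadd {p a b : ℝ} (hp0 : 0 < p) (hp1 : p < 1)
    (ha : 0 < a) (hb : 0 < b) : (a + b) ^ p < a ^ p + b ^ p := by
  have hab : 0 < a + b := by linarith
  have hpe : p - 1 + 1 = p := by ring
  have h1 : (a + b) ^ p = a * (a + b) ^ (p - 1) + b * (a + b) ^ (p - 1) := by
    have h := Real.rpow_add_one hab.ne' (p - 1)
    rw [hpe] at h
    rw [h]; ring
  have h2 : (a + b) ^ (p - 1) < a ^ (p - 1) :=
    Real.rpow_lt_rpow_of_neg ha (by linarith) (by linarith)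
  have h3 : (a + b) ^ (p - 1) < b ^ (p - 1) :=
    Real.rpow_lt_rpow_of_neg hb (by linarith) (by linarith)
  have ha' : a * (a + b) ^ (p - 1) < a ^ p := by
    calc a * (a + b) ^ (p - 1) < a * a ^ (p - 1) := by
          exact mul_lt_mul_of_pos_left h2 ha
      _ = a ^ p := by
          have h := Real.rpow_add_one ha.ne' (p - 1)
          rw [hpe] at h
          rw [h]; ring
  have hb' : b * (a + b) ^ (p - 1) < b ^ p := by
    calc b * (a + b) ^ (p - 1) < b * b ^ (p - 1) := by
          exact mul_lt_mul_of_pos_left h3 hb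
      _ = b ^ p := by
          have h := Real.rpow_add_one hb.ne' (p - 1)
          rw [hpe] at h
          rw [h]; ring
  linarith

/-- strict version for both nonzero -/
lemma absPow_add_lt {p x y : ℝ} (hp0 : 0 ≤ p) (hp1 : p < 1)
    (hx : x ≠ 0) (hy : y ≠ 0) : absPow p (x + y) < absPow p x + absPow p y := by
  by_cases hxy : x + y = 0
  · have h0 : absPow p 0 = 0 := by simp [absPow]
    rw [hxy, h0]
    linarith [absPow_pos (p := p) hx, absPow_pos (p := p) hy]
  · simp only [absPow, if_neg hx, if_neg hy, if_neg hxy]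
    rcases eq_or_lt_of_le hp0 with hp | hp
    · rw [← hp]
      simp [Real.rpow_zero]
    · calc |x + y| ^ p ≤ (|x| + |y|) ^ p :=
            Real.rpow_le_rpow (abs_nonneg _) (abs_add_le x y) hp0
        _ < |x| ^ p + |y| ^ p :=
            rpow_strict_subadd hp hp1 (abs_pos.2 hx) (abs_pos.2 hy)

lemma absPow_add_le {p x y : ℝ} (hp0 : 0 ≤ p) (hp1 : p < 1) :
    absPow p (x + y) ≤ absPow p x + absPow p y := by
  by_cases hx : x = 0
  · subst hx; simp [absPow]
  by_cases hy : y = 0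
  · subst hy; simp [absPow]
  exact le_of_lt (absPow_add_lt hp0 hp1 hx hy)

/-- If `z*` is the unique global minimizer of `g(z) = |1 − z|^q + (1/2)|z|^p`
with minimum value `c(p,q)`, then for all reals `x, y` one has
`|x + y − 1|^q + (1/2)(|x|^p + |y|^p) ≥ c(p,q)`, with equality iff
`(x, y) = (z*, 0)` or `(x, y) = (0, z*)`. -/
theorem stmt_8 (p q c zs : ℝ) (hp0 : 0 ≤ p) (hp1 : p < 1) (hq : 1 ≤ q)
    (hmin : ∀ y : ℝ,
      |1 - zs| ^ q + (1 / 2) * absPow p zs ≤ |1 - y| ^ q + (1 / 2) * absPow p y)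
    (huniq : ∀ w : ℝ,
      (∀ y : ℝ,
        |1 - w| ^ q + (1 / 2) * absPow p w ≤ |1 - y| ^ q + (1 / 2) * absPow p y) →
      w = zs)
    (hc : c = |1 - zs| ^ q + (1 / 2) * absPow p zs) :
    ∀ x y : ℝ,
      c ≤ |x + y - 1| ^ q + (1 / 2) * (absPow p x + absPow p y) ∧
      (|x + y - 1| ^ q + (1 / 2) * (absPow p x + absPow p y) = c ↔
        (x = zs ∧ y = 0) ∨ (x = 0 ∧ y = zs)) := by
  intro x y
  have habs : |x + y - 1| = |1 - (x + y)| := abs_sub_comm _ _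
  have hsub := absPow_add_le (p := p) (x := x) (y := y) hp0 hp1
  have hchain : |1 - (x + y)| ^ q + (1 / 2) * absPow p (x + y) ≤
      |x + y - 1| ^ q + (1 / 2) * (absPow p x + absPow p y) := by
    rw [habs]; linarith
  have hge : c ≤ |x + y - 1| ^ q + (1 / 2) * (absPow p x + absPow p y) := by
    calc c ≤ |1 - (x + y)| ^ q + (1 / 2) * absPow p (x + y) := hc ▸ hmin (x + y)
      _ ≤ _ := hchain
  refine ⟨hge, ?_, ?_⟩
  · intro heq
    -- equality forces x = 0 or y = 0
    have hor : x = 0 ∨ y = 0 := by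
      by_contra h
      push_neg at h
      have hlt := absPow_add_lt hp0 hp1 h.1 h.2
      have : |1 - (x + y)| ^ q + (1 / 2) * absPow p (x + y) <
          |x + y - 1| ^ q + (1 / 2) * (absPow p x + absPow p y) := by
        rw [habs]; linarith
      have := hc ▸ hmin (x + y)
      linarith
    have hmin' : |1 - (x + y)| ^ q + (1 / 2) * absPow p (x + y) = c := by
      have h1 := hc ▸ hmin (x + y)
      linarith [heq ▸ hchain]
    have hws : x + y = zs := by
      apply huniq
      intro w
      calc |1 - (x + y)| ^ q + (1 / 2) * absPow p (x + y) = c := hmin'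
        _ ≤ |1 - w| ^ q + (1 / 2) * absPow p w := hc ▸ hmin w
    rcases hor with h0 | h0
    · right
      subst h0
      simp only [zero_add] at hws
      exact ⟨rfl, hws⟩
    · left
      subst h0
      simp only [add_zero] at hws
      exact ⟨hws, rfl⟩
  · rintro (⟨hx, hy⟩ | ⟨hx, hy⟩) <;> subst hx <;> subst hy
    · rw [hc]
      simp [absPow, abs_sub_comm]
    · rw [hc]
      simp [absPow, abs_sub_comm]
end

section
/- Let 0 ≤ p < 1 and q ≥ 1 be real numbers, let a ∈ ℤ^n, and define for x, y ∈ ℝ^n: P(x,y) = |a^T(x − y)|^q + Σ_{j=1}^n |x_j + y_j − 1|^q + (1/2) Σ_{j=1}^n (|x_j|^p + |y_j|^p). Then P(x,y) ≥ n·c(p,q) for all x, y ∈ ℝ^n, where c(p,q) = min_{z∈ℝ} (|1−z|^q + (1/2)|z|^p). -/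
/-- The objective of the partition reduction:
`P(x,y) = |aᵀ(x−y)|^q + Σ_j |x_j + y_j − 1|^q + (1/2) Σ_j (|x_j|^p + |y_j|^p)`. -/
noncomputable def Ppart (n : ℕ) (p q : ℝ) (a : Fin n → ℤ) (x y : Fin n → ℝ) : ℝ :=
  |∑ j, (a j : ℝ) * (x j - y j)| ^ q + ∑ j, |x j + y j - 1| ^ q +
    (1 / 2) * ∑ j, (absPow p (x j) + absPow p (y j))

lemma rpow_add_le' {a b p : ℝ} (ha : 0 ≤ a) (hb : 0 ≤ b) (hp : 0 ≤ p) (hp1 : p ≤ 1) :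
    (a + b) ^ p ≤ a ^ p + b ^ p := by
  lift a to NNReal using ha
  lift b to NNReal using hb
  exact_mod_cast NNReal.rpow_add_le_add_rpow a b hp hp1

lemma absPow_subadd {p : ℝ} (hp0 : 0 ≤ p) (hp1 : p ≤ 1) (u v : ℝ) :
    absPow p (u + v) ≤ absPow p u + absPow p v := by
  rcases eq_or_ne (u + v) 0 with h | h
  · simp only [absPow, h, if_pos rfl]
    exact add_nonneg (absPow_nonneg p u) (absPow_nonneg p v)
  · rcases eq_or_lt_of_le hp0 with rfl | hp
    · -- p = 0 case
      have : u ≠ 0 ∨ v ≠ 0 := by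
        by_contra hne
        push_neg at hne
        exact h (by rw [hne.1, hne.2, add_zero])
      simp only [absPow, if_neg h, Real.rpow_zero]
      split_ifs with h1 h2 <;> try norm_num
      exact h (by rw [h1, h2, add_zero])
    · -- p > 0 case : absPow p z = |z|^p for all z
      have key : ∀ z : ℝ, absPow p z = |z| ^ p := by
        intro z
        unfold absPow
        split
        · rename_i hz
          rw [hz, abs_zero, Real.zero_rpow hp.ne']
        · rfl
      rw [key, key, key]
      calc |u + v| ^ p ≤ (|u| + |v|) ^ p :=
            Real.rpow_le_rpow (abs_nonneg _) (abs_add_le u v) hp0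
        _ ≤ |u| ^ p + |v| ^ p := rpow_add_le' (abs_nonneg u) (abs_nonneg v) hp0 hp1

/-- The partition-reduction objective is bounded below by `n·c(p,q)`, where
`c(p,q)` is the minimum of `g(z) = |1 − z|^q + (1/2)|z|^p` over ℝ. -/
theorem stmt_9 (n : ℕ) (p q c : ℝ) (hp0 : 0 ≤ p) (hp1 : p < 1) (hq : 1 ≤ q)
    (a : Fin n → ℤ)
    (hc : IsLeast (Set.range fun z : ℝ => |1 - z| ^ q + (1 / 2) * absPow p z) c)
    (x y : Fin n → ℝ) :
    (n : ℝ) * c ≤ Ppart n p q a x y := by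
  have hA : 0 ≤ |∑ j, (a j : ℝ) * (x j - y j)| ^ q :=
    Real.rpow_nonneg (abs_nonneg _) q
  have key : ∀ j : Fin n,
      c ≤ |x j + y j - 1| ^ q + (1 / 2) * (absPow p (x j) + absPow p (y j)) := by
    intro j
    have h1 : c ≤ |1 - (x j + y j)| ^ q + (1 / 2) * absPow p (x j + y j) :=
      hc.2 ⟨x j + y j, rfl⟩
    have h2 : |1 - (x j + y j)| = |x j + y j - 1| := abs_sub_comm _ _
    have h3 : absPow p (x j + y j) ≤ absPow p (x j) + absPow p (y j) :=
      absPow_subadd hp0 hp1.le (x j) (y j)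
    rw [h2] at h1
    nlinarith [h1, h3]
  have hsum : (n : ℝ) * c ≤
      ∑ j, (|x j + y j - 1| ^ q + (1 / 2) * (absPow p (x j) + absPow p (y j))) := by
    calc (n : ℝ) * c = ∑ _j : Fin n, c := by
          rw [Finset.sum_const, Finset.card_univ, Fintype.card_fin, nsmul_eq_mul]
      _ ≤ _ := Finset.sum_le_sum fun j _ => key j
  unfold Ppart
  rw [Finset.sum_add_distrib] at hsum
  rw [Finset.mul_sum]
  linarith [hsum, hA]
end

section
/- Let 0 < p < 1, q ≥ 1 and ε > 0 be real numbers, and define g_ε(z) = |1 − z|^q + (1/2)(|z| + ε)^p for z ∈ ℝ. Then g_ε attains its infimum over ℝ at a unique point, and this point lies in the interval [0,1]. -/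
/-!
On `[0, 1]` the function is `(1 - z) ^ q + (z + ε) ^ p / 2`, whose derivative is
`A z - B z` with `A z = p / 2 * (z + ε) ^ (p - 1)` and `B z = q * (1 - z) ^ (q - 1)`.
Outside `[0, 1]` it is strictly larger than at the nearer endpoint, and `g 1 < g 0`, so every
global minimizer lies in `(0, 1]`, and a minimizer exists by compactness.
For uniqueness, the sign of `g'` is that of `F = log A - log B`, which is strictly convex
because `p < 1 ≤ q`. Two minimizers `a < b` would give two zeros of `F`: at `a` (an interior
minimum) and at some `c ∈ (a, b)` (Rolle). Strict convexity then makes `F`, hence `g'`,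
positive on `(c, b)`, so `g c < g b = g a`, contradicting the minimality of `a`.
-/

open Set Real

theorem StrictConvexOn.pos_of_eq_zero_of_eq_zero {s : Set ℝ} {f : ℝ → ℝ}
    (hf : StrictConvexOn ℝ s f) {x y z : ℝ} (hx : x ∈ s) (hz : z ∈ s) (hxy : x < y)
    (hyz : y < z) (hfx : f x = 0) (hfy : f y = 0) : 0 < f z := by
  have hslope := hf.slope_strict_mono_adjacent hx hz hxy hyz
  rw [hfx, hfy, sub_zero, zero_div, sub_zero] at hslope
  exact (div_pos_iff_of_pos_right (sub_pos.2 hyz)).1 hslope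

noncomputable def gEps (p q ε z : ℝ) : ℝ :=
  |1 - z| ^ q + (1 / 2) * (|z| + ε) ^ p

noncomputable def gEpsLogRatio (p q ε z : ℝ) : ℝ :=
  log (p / 2) + (p - 1) * log (z + ε) - (log q + (q - 1) * log (1 - z))

section

variable {p q ε : ℝ}

theorem continuous_gEps (hp : 0 < p) (hq : 0 < q) : Continuous (gEps p q ε) := by
  unfold gEps
  fun_prop (disch := positivity)

theorem gEps_lt_gEps (hp : 0 < p) (hq : 0 < q) (hε : 0 ≤ ε) {y z : ℝ}
    (h₁ : |1 - y| < |1 - z|) (h₂ : |y| ≤ |z|) : gEps p q ε y < gEps p q ε z := by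
  unfold gEps
  exact add_lt_add_of_lt_of_le (rpow_lt_rpow (abs_nonneg _) h₁ hq) (by gcongr)

theorem gEps_one_lt_gEps_zero (hp0 : 0 < p) (hp1 : p < 1) (hq : 0 < q) (hε : 0 ≤ ε) :
    gEps p q ε 1 < gEps p q ε 0 := by
  have hsub : (1 + ε) ^ p ≤ 1 + ε ^ p := by
    simpa using rpow_add_le_add_rpow zero_le_one hε hp0.le hp1.le
  simp only [gEps, sub_self, abs_zero, zero_rpow hq.ne', abs_one, sub_zero, one_rpow, zero_add]
  linarith

theorem exists_gEps_lt_of_notMem_Icc (hp : 0 < p) (hq : 0 < q) (hε : 0 ≤ ε) {y : ℝ}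
    (hy : y ∉ Icc (0 : ℝ) 1) : ∃ z ∈ Icc (0 : ℝ) 1, gEps p q ε z < gEps p q ε y := by
  simp only [mem_Icc, not_and_or, not_le] at hy
  rcases hy with hy | hy
  · refine ⟨0, left_mem_Icc.2 zero_le_one, gEps_lt_gEps hp hq hε ?_ ?_⟩
    · rw [sub_zero, abs_one, abs_of_pos (by linarith)]
      linarith
    · simp
  · refine ⟨1, right_mem_Icc.2 zero_le_one, gEps_lt_gEps hp hq hε ?_ ?_⟩
    · simpa [abs_pos] using (sub_neg.2 hy).ne
    · rw [abs_one, abs_of_pos (by linarith)]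
      exact hy.le

theorem mem_Ioc_of_forall_gEps_le (hp0 : 0 < p) (hp1 : p < 1) (hq : 0 < q) (hε : 0 ≤ ε)
    {w : ℝ} (hw : ∀ y, gEps p q ε w ≤ gEps p q ε y) : w ∈ Ioc (0 : ℝ) 1 := by
  have hmem : w ∈ Icc (0 : ℝ) 1 := by
    by_contra h
    obtain ⟨z, -, hz⟩ := exists_gEps_lt_of_notMem_Icc hp0 hq hε h
    exact (hw z).not_gt hz
  refine ⟨hmem.1.lt_of_ne ?_, hmem.2⟩
  rintro rfl
  exact (hw 1).not_gt (gEps_one_lt_gEps_zero hp0 hp1 hq hε)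

theorem exists_mem_Icc_forall_gEps_le (hp : 0 < p) (hq : 0 < q) (hε : 0 ≤ ε) :
    ∃ z ∈ Icc (0 : ℝ) 1, ∀ y, gEps p q ε z ≤ gEps p q ε y := by
  obtain ⟨z, hz, hz_min⟩ := isCompact_Icc.exists_isMinOn (nonempty_Icc.2 zero_le_one)
    (continuous_gEps (ε := ε) hp hq).continuousOn
  refine ⟨z, hz, fun y => ?_⟩
  by_cases hy : y ∈ Icc (0 : ℝ) 1
  · exact hz_min hy
  · obtain ⟨y', hy', hlt⟩ := exists_gEps_lt_of_notMem_Icc hp hq hε hy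
    exact (hz_min hy').trans hlt.le

theorem hasDerivAt_gEps (hε : 0 ≤ ε) {z : ℝ} (hz : z ∈ Ioo (0 : ℝ) 1) :
    HasDerivAt (gEps p q ε) (p / 2 * (z + ε) ^ (p - 1) - q * (1 - z) ^ (q - 1)) z := by
  have hz1 : 0 < 1 - z := sub_pos.2 hz.2
  have hzε : 0 < z + ε := by linarith [hz.1]
  have hloc : (fun y => (1 - y) ^ q + 1 / 2 * (y + ε) ^ p) =ᶠ[nhds z] gEps p q ε := by
    filter_upwards [Ioo_mem_nhds hz.1 hz.2] with y hy
    rw [gEps, abs_of_pos (sub_pos.2 hy.2), abs_of_pos hy.1]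
  have h₁ := ((hasDerivAt_id z).const_sub 1).rpow_const (p := q) (Or.inl hz1.ne')
  have h₂ := ((hasDerivAt_id z).add_const ε).rpow_const (p := p) (Or.inl hzε.ne')
  refine ((h₁.add (h₂.const_mul (1 / 2))).congr_of_eventuallyEq hloc.symm).congr_deriv ?_
  simp only [id]
  ring

theorem gEpsLogRatio_eq (hp : 0 < p) (hq : 0 < q) {z : ℝ} (hz : z ∈ Ioo (-ε) 1) :
    gEpsLogRatio p q ε z = log (p / 2 * (z + ε) ^ (p - 1)) - log (q * (1 - z) ^ (q - 1)) := by
  have hzε : 0 < z + ε := by linarith [hz.1]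
  have hz1 : 0 < 1 - z := sub_pos.2 hz.2
  rw [log_mul (by positivity) (by positivity), log_mul hq.ne' (by positivity),
    log_rpow hzε, log_rpow hz1, gEpsLogRatio]

theorem deriv_gEps_eq_zero_iff (hp : 0 < p) (hq : 0 < q) (hε : 0 ≤ ε) {z : ℝ}
    (hz : z ∈ Ioo (0 : ℝ) 1) : deriv (gEps p q ε) z = 0 ↔ gEpsLogRatio p q ε z = 0 := by
  have hz' : z ∈ Ioo (-ε) 1 := ⟨by linarith [hz.1], hz.2⟩
  have hzε : 0 < z + ε := by linarith [hz.1]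
  have hz1 : 0 < 1 - z := sub_pos.2 hz.2
  rw [(hasDerivAt_gEps hε hz).deriv, gEpsLogRatio_eq hp hq hz', sub_eq_zero, sub_eq_zero,
    log_injOn_pos.eq_iff (mem_Ioi.2 (by positivity)) (mem_Ioi.2 (by positivity))]

theorem deriv_gEps_pos_iff (hp : 0 < p) (hq : 0 < q) (hε : 0 ≤ ε) {z : ℝ}
    (hz : z ∈ Ioo (0 : ℝ) 1) : 0 < deriv (gEps p q ε) z ↔ 0 < gEpsLogRatio p q ε z := by
  have hz' : z ∈ Ioo (-ε) 1 := ⟨by linarith [hz.1], hz.2⟩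
  have hzε : 0 < z + ε := by linarith [hz.1]
  have hz1 : 0 < 1 - z := sub_pos.2 hz.2
  rw [(hasDerivAt_gEps hε hz).deriv, gEpsLogRatio_eq hp hq hz', sub_pos, sub_pos,
    log_lt_log_iff (by positivity) (by positivity)]

theorem strictConvexOn_gEpsLogRatio (hp1 : p < 1) (hq : 1 ≤ q) :
    StrictConvexOn ℝ (Ioo (-ε) 1) (gEpsLogRatio p q ε) := by
  refine ⟨convex_Ioo _ _, fun x hx y hy hxy a b ha hb hab => ?_⟩
  have hlog₁ := strictConcaveOn_log_Ioi.2 (x := x + ε) (y := y + ε)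
    (mem_Ioi.2 (by linarith [hx.1])) (mem_Ioi.2 (by linarith [hy.1])) (by simpa using hxy)
    ha hb hab
  have hlog₂ := strictConcaveOn_log_Ioi.concaveOn.2 (x := 1 - x) (y := 1 - y)
    (mem_Ioi.2 (sub_pos.2 hx.2)) (mem_Ioi.2 (sub_pos.2 hy.2)) ha.le hb.le hab
  obtain rfl : b = 1 - a := by linarith
  simp only [smul_eq_mul, gEpsLogRatio] at *
  rw [show a * (x + ε) + (1 - a) * (y + ε) = a * x + (1 - a) * y + ε by ring] at hlog₁
  rw [show a * (1 - x) + (1 - a) * (1 - y) = 1 - (a * x + (1 - a) * y) by ring] at hlog₂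
  linarith [mul_lt_mul_of_neg_left hlog₁ (sub_neg.2 hp1),
    mul_le_mul_of_nonneg_left hlog₂ (sub_nonneg.2 hq)]

theorem not_lt_of_forall_gEps_le (hp0 : 0 < p) (hp1 : p < 1) (hq : 1 ≤ q) (hε : 0 ≤ ε)
    {a b : ℝ} (ha : 0 < a) (hb : b ≤ 1) (ha_min : ∀ y, gEps p q ε a ≤ gEps p q ε y)
    (hb_min : ∀ y, gEps p q ε b ≤ gEps p q ε y) : ¬a < b := by
  intro hab
  have hq0 : 0 < q := by linarith
  have hg := (continuous_gEps (ε := ε) hp0 hq0).continuousOn (s := Icc a b)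
  have hF := strictConvexOn_gEpsLogRatio (ε := ε) hp1 hq
  have hI : Ioo a b ⊆ Ioo 0 1 := Ioo_subset_Ioo ha.le hb
  have hJ : Ioo 0 1 ⊆ Ioo (-ε) 1 := Ioo_subset_Ioo_left (by linarith)
  have haI : a ∈ Ioo (0 : ℝ) 1 := ⟨ha, hab.trans_le hb⟩
  have hFa : gEpsLogRatio p q ε a = 0 :=
    (deriv_gEps_eq_zero_iff hp0 hq0 hε haI).1
      (IsLocalMin.deriv_eq_zero (Filter.Eventually.of_forall ha_min))
  obtain ⟨c, hc, hc'⟩ := exists_deriv_eq_zero hab hg ((ha_min b).antisymm (hb_min a))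
  have hFc : gEpsLogRatio p q ε c = 0 := (deriv_gEps_eq_zero_iff hp0 hq0 hε (hI hc)).1 hc'
  have hmono : StrictMonoOn (gEps p q ε) (Icc c b) := by
    refine strictMonoOn_of_deriv_pos (convex_Icc c b) (hg.mono (Icc_subset_Icc hc.1.le le_rfl))
      fun z hz => ?_
    rw [interior_Icc] at hz
    have hz' : z ∈ Ioo a b := ⟨hc.1.trans hz.1, hz.2⟩
    exact (deriv_gEps_pos_iff hp0 hq0 hε (hI hz')).2 (hF.pos_of_eq_zero_of_eq_zero
      (hJ haI) (hJ (hI hz')) hc.1 hz.1 hFa hFc)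
  have hcb := hmono (left_mem_Icc.2 hc.2.le) (right_mem_Icc.2 hc.2.le) hc.2
  exact (hb_min c).not_gt hcb

theorem eq_of_forall_gEps_le (hp0 : 0 < p) (hp1 : p < 1) (hq : 1 ≤ q) (hε : 0 ≤ ε)
    {a b : ℝ} (ha_min : ∀ y, gEps p q ε a ≤ gEps p q ε y)
    (hb_min : ∀ y, gEps p q ε b ≤ gEps p q ε y) : a = b := by
  have hq0 : 0 < q := by linarith
  have ha := mem_Ioc_of_forall_gEps_le hp0 hp1 hq0 hε ha_min
  have hb := mem_Ioc_of_forall_gEps_le hp0 hp1 hq0 hε hb_min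
  exact le_antisymm (not_lt.1 (not_lt_of_forall_gEps_le hp0 hp1 hq hε hb.1 ha.2 hb_min ha_min))
    (not_lt.1 (not_lt_of_forall_gEps_le hp0 hp1 hq hε ha.1 hb.2 ha_min hb_min))

end

/-- For `0 < p < 1`, `q ≥ 1` and `ε > 0`, the smoothed function
`g_ε(z) = |1 − z|^q + (1/2)(|z| + ε)^p` attains its infimum over ℝ at a unique
point, and this point lies in `[0, 1]`. -/
theorem stmt_11 (p q eps : ℝ) (hp0 : 0 < p) (hp1 : p < 1) (hq : 1 ≤ q)
    (heps : 0 < eps) :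
    ∃ z : ℝ, z ∈ Set.Icc (0 : ℝ) 1 ∧
      (∀ y : ℝ,
        |1 - z| ^ q + (1 / 2) * (|z| + eps) ^ p ≤
          |1 - y| ^ q + (1 / 2) * (|y| + eps) ^ p) ∧
      ∀ w : ℝ,
        (∀ y : ℝ,
          |1 - w| ^ q + (1 / 2) * (|w| + eps) ^ p ≤
            |1 - y| ^ q + (1 / 2) * (|y| + eps) ^ p) →
        w = z := by
  obtain ⟨z, hz, hz_min⟩ := exists_mem_Icc_forall_gEps_le hp0 (zero_lt_one.trans_le hq) heps.le
  exact ⟨z, hz, hz_min, fun w hw => eq_of_forall_gEps_le hp0 hp1 hq heps.le hw hz_min⟩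
end

section
/- Let 0 < p < 1, q ≥ 1, ε > 0 be real numbers and let m ≥ 1 be an integer. Then the infimum over x ∈ ℝ^m of the function |Σ_{j=1}^m x_j − 1|^q + (1/2) Σ_{j=1}^m (|x_j| + ε)^p equals c(p,q,ε) + ((m−1)/2)·ε^p, where c(p,q,ε) = min_{z∈ℝ} (|1−z|^q + (1/2)(|z|+ε)^p); moreover this infimum is attained at vectors with at most one nonzero coordinate, equal to the minimizer of g_ε. -/
/-!
A concave function `f` has decreasing increments, so `f (a + x + y) + f a ≤ f (a + x) + f (a + y)`
for `x, y ≥ 0`; by induction, `f (a + ∑ xᵢ) + (m - 1) f a ≤ ∑ f (a + xᵢ)`. Applied to `t ↦ t ^ p`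
with `a = ε` and increments `|xⱼ|`, and using `|∑ xⱼ| ≤ ∑ |xⱼ|`, the objective at `x` is at least
`g_ε (∑ xⱼ) + (m - 1)/2 · ε ^ p ≥ c + (m - 1)/2 · ε ^ p`, and `Pi.single j z*` attains this value.
-/

section Concave

variable {𝕜 : Type*} [Field 𝕜] [LinearOrder 𝕜] [IsStrictOrderedRing 𝕜] {s : Set 𝕜} {f : 𝕜 → 𝕜}

theorem ConcaveOn.map_add_add_add_le (hf : ConcaveOn 𝕜 s f) {a x y : 𝕜} (ha : a ∈ s)
    (haxy : a + x + y ∈ s) (hx : 0 ≤ x) (hy : 0 ≤ y) :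
    f (a + x + y) + f a ≤ f (a + x) + f (a + y) := by
  rcases (add_nonneg hx hy).eq_or_lt with hxy | hxy
  · obtain ⟨rfl, rfl⟩ : x = 0 ∧ y = 0 := ⟨by linarith, by linarith⟩
    simp
  -- `a + x` and `a + y` are the convex combinations of `a + x + y` and `a` with swapped weights
  set θ := x / (x + y)
  have hθ : θ * (x + y) = x := div_mul_cancel₀ x hxy.ne'
  have hθ₀ : 0 ≤ θ := div_nonneg hx hxy.le
  have hθ₁ : 0 ≤ 1 - θ := by rw [sub_nonneg]; exact div_le_one_of_le₀ (by linarith) hxy.le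
  have h₁ := hf.2 haxy ha hθ₀ hθ₁ (by ring)
  have h₂ := hf.2 haxy ha hθ₁ hθ₀ (by ring)
  simp only [smul_eq_mul] at h₁ h₂
  rw [show θ * (a + x + y) + (1 - θ) * a = a + x by linear_combination hθ] at h₁
  rw [show (1 - θ) * (a + x + y) + θ * a = a + y by linear_combination -hθ] at h₂
  linarith

theorem ConcaveOn.map_add_sum_add_le {ι : Type*} (hf : ConcaveOn 𝕜 s f) {a : 𝕜} (ha : a ∈ s)
    (t : Finset ι) {x : ι → 𝕜} (hx : ∀ i ∈ t, 0 ≤ x i) (hat : a + ∑ i ∈ t, x i ∈ s) :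
    f (a + ∑ i ∈ t, x i) + (t.card - 1) * f a ≤ ∑ i ∈ t, f (a + x i) := by
  classical
  induction t using Finset.induction_on with
  | empty => simp
  | insert i t hit ih =>
    have hxi := hx i (Finset.mem_insert_self i t)
    have hxt : ∀ j ∈ t, 0 ≤ x j := fun j hj => hx j (Finset.mem_insert_of_mem hj)
    have hT : 0 ≤ ∑ j ∈ t, x j := Finset.sum_nonneg hxt
    rw [Finset.sum_insert hit] at hat
    rw [Finset.sum_insert hit, Finset.sum_insert hit]
    have hat' : a + ∑ j ∈ t, x j ∈ s :=
      hf.1.ordConnected.out ha hat ⟨by linarith, by linarith⟩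
    have hsub := hf.map_add_add_add_le ha (by rwa [← add_assoc] at hat) hxi hT
    rw [Finset.card_insert_of_notMem hit, Nat.cast_succ, ← add_assoc]
    linarith [ih hxt hat']

end Concave

theorem Fintype.sum_comp_single {ι M R : Type*} [Fintype ι] [DecidableEq ι] [Zero M]
    [Ring R] (f : M → R) (j : ι) (z : M) :
    ∑ i, f ((Pi.single j z : ι → M) i) = f z + (Fintype.card ι - 1) * f 0 := by
  have : Nonempty ι := ⟨j⟩
  rw [← Finset.add_sum_erase _ _ (Finset.mem_univ j), Pi.single_eq_same,
    Finset.sum_congr rfl fun i hi => by rw [Pi.single_eq_of_ne (Finset.ne_of_mem_erase hi)],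
    Finset.sum_const, Finset.card_erase_of_mem (Finset.mem_univ j), Finset.card_univ,
    nsmul_eq_mul, Nat.cast_sub Fintype.card_pos, Nat.cast_one]

theorem abs_sum_add_rpow_add_le {ι : Type*} [Fintype ι] {p e : ℝ} (hp₀ : 0 ≤ p) (hp₁ : p ≤ 1)
    (he : 0 ≤ e) (x : ι → ℝ) :
    (|∑ i, x i| + e) ^ p + (Fintype.card ι - 1) * e ^ p ≤ ∑ i, (|x i| + e) ^ p := by
  have hconc : ConcaveOn ℝ (Set.Ici 0) fun y : ℝ => y ^ p := Real.concaveOn_rpow hp₀ hp₁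
  calc (|∑ i, x i| + e) ^ p + (Fintype.card ι - 1) * e ^ p
      ≤ (e + ∑ i, |x i|) ^ p + ((Finset.univ : Finset ι).card - 1) * e ^ p := by
        rw [add_comm e, Finset.card_univ]
        gcongr
        exact Finset.abs_sum_le_sum_abs _ _
    _ ≤ ∑ i, (e + |x i|) ^ p :=
        hconc.map_add_sum_add_le he _ (fun i _ => abs_nonneg (x i))
          (add_nonneg he (Finset.sum_nonneg fun i _ => abs_nonneg (x i)))
    _ = ∑ i, (|x i| + e) ^ p := by simp_rw [add_comm e]

theorem stmt_13_general (p q eps : ℝ) (m : ℕ) (hm : 1 ≤ m) (hp0 : 0 < p) (hp1 : p < 1)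
    (heps : 0 < eps) (zs : ℝ)
    (hzs : ∀ y : ℝ,
      |1 - zs| ^ q + (1 / 2) * (|zs| + eps) ^ p ≤
        |1 - y| ^ q + (1 / 2) * (|y| + eps) ^ p) :
    IsLeast
      (Set.range fun x : Fin m → ℝ =>
        |(∑ j, x j) - 1| ^ q + (1 / 2) * ∑ j, (|x j| + eps) ^ p)
      (|1 - zs| ^ q + (1 / 2) * (|zs| + eps) ^ p + ((m : ℝ) - 1) / 2 * eps ^ p) ∧
    ∀ j : Fin m,
      |(∑ i, (Pi.single j zs : Fin m → ℝ) i) - 1| ^ q +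
          (1 / 2) * ∑ i, (|(Pi.single j zs : Fin m → ℝ) i| + eps) ^ p =
        |1 - zs| ^ q + (1 / 2) * (|zs| + eps) ^ p + ((m : ℝ) - 1) / 2 * eps ^ p := by
  have hsingle : ∀ j : Fin m,
      |(∑ i, (Pi.single j zs : Fin m → ℝ) i) - 1| ^ q +
          (1 / 2) * ∑ i, (|(Pi.single j zs : Fin m → ℝ) i| + eps) ^ p =
        |1 - zs| ^ q + (1 / 2) * (|zs| + eps) ^ p + ((m : ℝ) - 1) / 2 * eps ^ p := by
    intro j
    rw [Finset.sum_pi_single', if_pos (Finset.mem_univ j),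
      Fintype.sum_comp_single (fun z => (|z| + eps) ^ p), Fintype.card_fin, abs_sub_comm]
    simp only [abs_zero, zero_add]
    ring
  refine ⟨⟨⟨Pi.single ⟨0, hm⟩ zs, hsingle _⟩, ?_⟩, hsingle⟩
  rintro _ ⟨x, rfl⟩
  have hpen := abs_sum_add_rpow_add_le hp0.le hp1.le heps.le x
  rw [Fintype.card_fin] at hpen
  have hmin := hzs (∑ j, x j)
  rw [abs_sub_comm 1 (∑ j, x j)] at hmin
  dsimp only
  linarith

/-- If `z*` minimizes `g_ε(z) = |1 − z|^q + (1/2)(|z| + ε)^p` over ℝ, then the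
infimum over `x ∈ ℝ^m` of `|Σ_j x_j − 1|^q + (1/2) Σ_j (|x_j| + ε)^p` equals
`c(p,q,ε) + ((m−1)/2)·ε^p` where `c(p,q,ε) = g_ε(z*)`, and it is attained at
each vector with at most one nonzero coordinate equal to `z*`. -/
theorem stmt_13 (p q eps : ℝ) (m : ℕ) (hm : 1 ≤ m) (hp0 : 0 < p) (hp1 : p < 1)
    (hq : 1 ≤ q) (heps : 0 < eps) (zs : ℝ)
    (hzs : ∀ y : ℝ,
      |1 - zs| ^ q + (1 / 2) * (|zs| + eps) ^ p ≤
        |1 - y| ^ q + (1 / 2) * (|y| + eps) ^ p) :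
    IsLeast
      (Set.range fun x : Fin m → ℝ =>
        |(∑ j, x j) - 1| ^ q + (1 / 2) * ∑ j, (|x j| + eps) ^ p)
      (|1 - zs| ^ q + (1 / 2) * (|zs| + eps) ^ p + ((m : ℝ) - 1) / 2 * eps ^ p) ∧
    ∀ j : Fin m,
      |(∑ i, (Pi.single j zs : Fin m → ℝ) i) - 1| ^ q +
          (1 / 2) * ∑ i, (|(Pi.single j zs : Fin m → ℝ) i| + eps) ^ p =
        |1 - zs| ^ q + (1 / 2) * (|zs| + eps) ^ p + ((m : ℝ) - 1) / 2 * eps ^ p :=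
  stmt_13_general p q eps m hm hp0 hp1 heps zs hzs
end

section
/- Let 0 < p < 1, q ≥ 1, ε > 0 be real numbers, let m, n ≥ 1 be integers, let a ∈ ℤ^n and B ∈ ℤ, and define for x ∈ ℝ^{n×m}: P_ε(x) = Σ_{j=1}^m |Σ_{i=1}^n a_i x_{ij} − B|^q + Σ_{i=1}^n |Σ_{j=1}^m x_{ij} − 1|^q + (1/2) Σ_{i=1}^n Σ_{j=1}^m (|x_{ij}| + ε)^p. Then P_ε(x) ≥ n·( c(p,q,ε) + ((m−1)/2)·ε^p ) for all x ∈ ℝ^{n×m}, where c(p,q,ε) = min_{z∈ℝ} (|1−z|^q + (1/2)(|z|+ε)^p). -/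
/-!
Since `0 < p < 1`, the map `u ↦ (u + ε)^p - ε^p` is concave on `[0, ∞)` and vanishes at `0`,
hence subadditive; thus
`(|x_{i1}| + ε)^p + ⋯ + (|x_{im}| + ε)^p ≥ (|s_i| + ε)^p + (m - 1) ε^p`
for the row sum `s_i = ∑_j x_{ij}`. Each row therefore contributes at least
`g_ε(s_i) + (m - 1) ε^p / 2 ≥ c + (m - 1) ε^p / 2`, and the remaining terms are nonnegative.
-/

open Finset

lemma ConcaveOn.map_add_le_of_map_zero_nonneg {f : ℝ → ℝ} (hf : ConcaveOn ℝ (Set.Ici 0) f)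
    (h0 : 0 ≤ f 0) {x y : ℝ} (hx : 0 ≤ x) (hy : 0 ≤ y) : f (x + y) ≤ f x + f y := by
  rcases (add_nonneg hx hy).eq_or_lt with hxy | hxy
  · obtain ⟨rfl, rfl⟩ : x = 0 ∧ y = 0 := ⟨by linarith, by linarith⟩
    simpa using h0
  -- `x` and `y` are convex combinations of `0` and `x + y`
  have key : ∀ {u v : ℝ}, 0 ≤ u → 0 ≤ v → u + v = x + y →
      u / (x + y) * f (x + y) ≤ f u := by
    intro u v hu hv huv
    have h := hf.2 Set.self_mem_Ici (Set.mem_Ici.2 hxy.le)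
      (div_nonneg hv hxy.le) (div_nonneg hu hxy.le)
      (by rw [← add_div, add_comm, huv, div_self hxy.ne'])
    rw [smul_eq_mul, smul_eq_mul, smul_zero, zero_add, smul_eq_mul,
      div_mul_cancel₀ _ hxy.ne'] at h
    linarith [mul_nonneg (div_nonneg hv hxy.le) h0]
  have hx' := key hx hy rfl
  have hy' := key hy hx (add_comm y x)
  have : x / (x + y) * f (x + y) + y / (x + y) * f (x + y) = f (x + y) := by
    field_simp
  linarith

lemma concaveOn_rpow_add_sub_rpow {p ε : ℝ} (hp0 : 0 ≤ p) (hp1 : p ≤ 1) (hε : 0 ≤ ε) :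
    ConcaveOn ℝ (Set.Ici 0) fun u : ℝ => (u + ε) ^ p - ε ^ p := by
  have h := ((Real.concaveOn_rpow hp0 hp1).translate_left ε).subset
    (fun u (hu : 0 ≤ u) => show 0 ≤ ε + u by linarith) (convex_Ici 0)
  exact h.sub (convexOn_const _ (convex_Ici 0))

lemma rpow_sum_add_add_card_sub_one_mul_le {ι : Type*} {p ε : ℝ} (hp0 : 0 ≤ p) (hp1 : p ≤ 1)
    (hε : 0 ≤ ε) (s : Finset ι) {t : ι → ℝ} (ht : ∀ i ∈ s, 0 ≤ t i) :
    (∑ i ∈ s, t i + ε) ^ p + ((#s : ℝ) - 1) * ε ^ p ≤ ∑ i ∈ s, (t i + ε) ^ p := by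
  have h := le_sum_of_subadditive_on_pred (fun u : ℝ => (u + ε) ^ p - ε ^ p) (0 ≤ ·)
    (by simp) (fun x y hx hy =>
      (concaveOn_rpow_add_sub_rpow hp0 hp1 hε).map_add_le_of_map_zero_nonneg (by simp) hx hy)
    (fun _ _ => add_nonneg) t ht
  simp only [sum_sub_distrib, sum_const, nsmul_eq_mul] at h
  linarith

lemma row_lower_bound {ι : Type*} [Fintype ι] {p q ε c : ℝ} (hp0 : 0 ≤ p) (hp1 : p ≤ 1)
    (hε : 0 ≤ ε)
    (hc : c ∈ lowerBounds (Set.range fun z : ℝ => |1 - z| ^ q + (1 / 2) * (|z| + ε) ^ p))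
    (y : ι → ℝ) :
    c + ((Fintype.card ι : ℝ) - 1) / 2 * ε ^ p ≤
      |(∑ j, y j) - 1| ^ q + (1 / 2) * ∑ j, (|y j| + ε) ^ p := by
  have hz := hc ⟨∑ j, y j, rfl⟩
  have hmono : (|∑ j, y j| + ε) ^ p ≤ (∑ j, |y j| + ε) ^ p := by
    gcongr
    exact abs_sum_le_sum_abs _ _
  have hsub := rpow_sum_add_add_card_sub_one_mul_le hp0 hp1 hε univ
    (t := fun j => |y j|) (fun j _ => abs_nonneg _)
  rw [card_univ] at hsub
  simp only [abs_sub_comm (1 : ℝ)] at hz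
  linarith

theorem stmt_14_general (p q eps : ℝ) (m n : ℕ)
    (hp0 : 0 < p) (hp1 : p < 1) (heps : 0 < eps)
    (a : Fin n → ℤ) (B : ℤ) (c : ℝ)
    (hc : IsLeast
      (Set.range fun z : ℝ => |1 - z| ^ q + (1 / 2) * (|z| + eps) ^ p) c)
    (x : Fin n → Fin m → ℝ) :
    (n : ℝ) * (c + ((m : ℝ) - 1) / 2 * eps ^ p) ≤
      (∑ j, |(∑ i, (a i : ℝ) * x i j) - (B : ℝ)| ^ q) +
        (∑ i, |(∑ j, x i j) - 1| ^ q) +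
        (1 / 2) * ∑ i, ∑ j, (|x i j| + eps) ^ p := by
  have hrows : (n : ℝ) * (c + ((m : ℝ) - 1) / 2 * eps ^ p) ≤
      ∑ i, (|(∑ j, x i j) - 1| ^ q + (1 / 2) * ∑ j, (|x i j| + eps) ^ p) := by
    simpa [mul_add] using sum_le_sum fun i (_ : i ∈ univ) =>
      row_lower_bound hp0.le hp1.le heps.le hc.2 (x i)
  have hfit : 0 ≤ ∑ j, |(∑ i, (a i : ℝ) * x i j) - (B : ℝ)| ^ q :=
    sum_nonneg fun j _ => Real.rpow_nonneg (abs_nonneg _) _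
  rw [sum_add_distrib, ← mul_sum] at hrows
  linarith

/-- The 3-partition reduction objective for the smoothed problem is bounded
below by `n·(c(p,q,ε) + ((m−1)/2)·ε^p)`, where `c(p,q,ε)` is the minimum of
`g_ε(z) = |1 − z|^q + (1/2)(|z| + ε)^p` over ℝ. -/
theorem stmt_14 (p q eps : ℝ) (m n : ℕ) (hm : 1 ≤ m) (hn : 1 ≤ n)
    (hp0 : 0 < p) (hp1 : p < 1) (hq : 1 ≤ q) (heps : 0 < eps)
    (a : Fin n → ℤ) (B : ℤ) (c : ℝ)
    (hc : IsLeast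
      (Set.range fun z : ℝ => |1 - z| ^ q + (1 / 2) * (|z| + eps) ^ p) c)
    (x : Fin n → Fin m → ℝ) :
    (n : ℝ) * (c + ((m : ℝ) - 1) / 2 * eps ^ p) ≤
      (∑ j, |(∑ i, (a i : ℝ) * x i j) - (B : ℝ)| ^ q) +
        (∑ i, |(∑ j, x i j) - 1| ^ q) +
        (1 / 2) * ∑ i, ∑ j, (|x i j| + eps) ^ p :=
  stmt_14_general p q eps m n hp0 hp1 heps a B c hc x
end

section
/- Consider f(x₁, x₂) = (x₁ + x₂ − 1)² + λ(√|x₁| + √|x₂|) with λ = 8/(3√3). Then x = (0,0) is the unique global minimizer of f over ℝ², with f(0,0) = 1. -/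
noncomputable def fEx (x y : ℝ) : ℝ :=
  (x + y - 1) ^ 2 + (8 / (3 * Real.sqrt 3)) * (Real.sqrt |x| + Real.sqrt |y|)

lemma cube_key (u : ℝ) (hu : 0 ≤ u) : 0 < u ^ 3 - 6 * u + 8 := by
  have h2 : (Real.sqrt 2) ^ 2 = 2 := Real.sq_sqrt (by norm_num)
  have h2n : 0 ≤ Real.sqrt 2 := Real.sqrt_nonneg 2
  have hlt : Real.sqrt 2 < 2 := by nlinarith [sq_nonneg (Real.sqrt 2 - 2)]
  nlinarith [sq_nonneg (u - Real.sqrt 2), mul_nonneg (sq_nonneg (u - Real.sqrt 2)) hu,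
    mul_nonneg (sq_nonneg (u - Real.sqrt 2)) h2n]

lemma s_key (s : ℝ) (hs : 0 ≤ s) : 0 < s ^ 3 - 2 * s + 8 / (3 * Real.sqrt 3) := by
  have ht : 0 < Real.sqrt 3 := Real.sqrt_pos.mpr (by norm_num)
  have ht2 : (Real.sqrt 3) ^ 2 = 3 := Real.sq_sqrt (by norm_num)
  have h := cube_key (s * Real.sqrt 3) (mul_nonneg hs ht.le)
  have h9 : 8 / (3 * Real.sqrt 3) = 8 * Real.sqrt 3 / 9 := by
    rw [div_eq_div_iff (by positivity) (by norm_num)]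
    nlinarith
  rw [h9]
  have h3 : Real.sqrt 3 ^ 3 = 3 * Real.sqrt 3 := by rw [pow_succ, ht2]
  by_contra hcon
  push_neg at hcon
  have hm := mul_le_mul_of_nonneg_left hcon ht.le
  nlinarith [h, ht2, h3]

lemma lam_pos : 0 < 8 / (3 * Real.sqrt 3) := by positivity

lemma fEx_gt (x y : ℝ) (hxy : ¬(x = 0 ∧ y = 0)) : 1 < fEx x y := by
  have hl := lam_pos
  set L := 8 / (3 * Real.sqrt 3) with hL
  have ha2 : (Real.sqrt |x|) ^ 2 = |x| := Real.sq_sqrt (abs_nonneg x)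
  have hb2 : (Real.sqrt |y|) ^ 2 = |y| := Real.sq_sqrt (abs_nonneg y)
  have han : 0 ≤ Real.sqrt |x| := Real.sqrt_nonneg _
  have hbn : 0 ≤ Real.sqrt |y| := Real.sqrt_nonneg _
  set a := Real.sqrt |x|
  set b := Real.sqrt |y|
  unfold fEx
  rcases lt_trichotomy (x + y) 0 with ht | ht | ht
  · nlinarith [mul_nonneg hl.le (add_nonneg han hbn)]
  · -- x + y = 0, not both zero, so a + b > 0
    have hab : 0 < a + b := by
      rcases eq_or_ne x 0 with hx | hx
      · have hy : y ≠ 0 := fun hy => hxy ⟨hx, hy⟩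
        have : 0 < b := Real.sqrt_pos.mpr (abs_pos.mpr hy)
        linarith
      · have : 0 < a := Real.sqrt_pos.mpr (abs_pos.mpr hx)
        linarith
    have := mul_pos hl hab
    nlinarith
  · set s := Real.sqrt (x + y) with hsdef
    have hs : 0 < s := Real.sqrt_pos.mpr ht
    have hs2 : s ^ 2 = x + y := Real.sq_sqrt ht.le
    have htri : x + y ≤ |x| + |y| := by
      calc x + y ≤ |x + y| := le_abs_self _
      _ ≤ |x| + |y| := abs_add_le x y
    have hsab : s ≤ a + b := by
      nlinarith [mul_nonneg han hbn]
    have hkey := s_key s hs.le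
    rw [← hL] at hkey
    nlinarith [mul_pos hs hkey, mul_le_mul_of_nonneg_left hsab hl.le]

lemma fEx_00 : fEx 0 0 = 1 := by
  unfold fEx
  simp

/-- For `λ = 8/(3√3)`, the point `(0,0)` is the unique global minimizer of
`f(x₁,x₂) = (x₁+x₂−1)² + λ(√|x₁| + √|x₂|)`, with `f(0,0) = 1`. -/
theorem stmt_15 :
    fEx 0 0 = 1 ∧ (∀ x y : ℝ, fEx 0 0 ≤ fEx x y) ∧
      ∀ x y : ℝ, (∀ u v : ℝ, fEx x y ≤ fEx u v) → x = 0 ∧ y = 0 := by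
  refine ⟨fEx_00, fun x y => ?_, fun x y h => ?_⟩
  · rw [fEx_00]
    by_cases hxy : x = 0 ∧ y = 0
    · rw [hxy.1, hxy.2, fEx_00]
    · exact (fEx_gt x y hxy).le
  · by_contra hxy
    have h1 := h 0 0
    rw [fEx_00] at h1
    exact absurd (fEx_gt x y hxy) (not_lt.mpr h1)
end
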